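/- Let V and V' be multisets, each of ℓ vectors in ℝⁿ. If for every subset C ⊆ [n] with |C| ≤ ℓ it holds that |∩_{i∈C} S_V(i)| > 0 if and only if |∩_{i∈C} S_{V'}(i)| > 0, then Maximal(V) = Maximal(V'). That is, knowing for every set C of size at most ℓ whether some vector has non-zero entries on all of C uniquely determines the set of maximal supports. -/

import Mathlib

/-- The support of a vector `u ∈ ℝⁿ`. -/
noncomputable def suppVec {n : ℕ} (u : Fin n → ℝ) : Finset (Fin n) :=
  Finset.univ.filter fun i => u i ≠ 0

/-- `Maximal(V)`: the maximal elements, under set inclusion, of the family of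
supports of the vectors of the multiset `V`. -/
noncomputable def maximalSupports {n ℓ : ℕ} (V : Fin ℓ → Fin n → ℝ) :
    Finset (Finset (Fin n)) :=
  (Finset.univ.image fun j => suppVec (V j)).filter
    fun A => ∀ B ∈ (Finset.univ.image fun j => suppVec (V j)), A ⊆ B → A = B

/-- `|∩_{i ∈ C} S_V(i)|`: the number of vectors in `V` (with multiplicity) having a
non-zero entry in every coordinate of `C`. -/
noncomputable def interCount {n ℓ : ℕ} (V : Fin ℓ → Fin n → ℝ) (C : Finset (Fin n)) : ℕ :=
  (Finset.univ.filter fun j : Fin ℓ => ∀ i ∈ C, V j i ≠ 0).card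

/-! A set is contained in the support of some vector of `V` as soon as each of its subsets of
size at most `ℓ` is: otherwise every one of the `ℓ` vectors misses some point of the set, and
these `ℓ` points form a small subset contained in no support. Hence the answers for `|C| ≤ ℓ`
determine the down-closure of the family of supports, and the maximal elements of a family are
those of its down-closure. -/

open Finset

theorem maximal_mem_lowerClosure_iff {α : Type*} [PartialOrder α] {s : Set α} {x : α} :
    Maximal (· ∈ lowerClosure s) x ↔ Maximal (· ∈ s) x := by
  constructor
  · intro h
    obtain ⟨b, hb, hxb⟩ := mem_lowerClosure.1 h.prop
    have hxs : x ∈ s := h.eq_of_ge (subset_lowerClosure hb) hxb ▸ hb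
    exact h.mono subset_lowerClosure hxs
  · intro h
    refine ⟨subset_lowerClosure h.prop, fun y hy hxy => ?_⟩
    obtain ⟨b, hb, hyb⟩ := mem_lowerClosure.1 hy
    exact hyb.trans (h.2 hb (hxy.trans hyb))

theorem exists_subset_of_forall_subset_card_le {α ι : Type*} [DecidableEq α] [Fintype ι]
    (S : ι → Finset α) (A : Finset α)
    (h : ∀ C ⊆ A, #C ≤ Fintype.card ι → ∃ j, C ⊆ S j) : ∃ j, A ⊆ S j := by
  by_contra! hA
  choose f hfA hfS using fun j => not_subset.1 (hA j)
  obtain ⟨j, hj⟩ := h (univ.image f) (image_subset_iff.2 fun j _ => hfA j) card_image_le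
  exact hfS j (hj (mem_image_of_mem f (mem_univ j)))

section Supports

variable {n ℓ : ℕ}

theorem mem_maximalSupports_iff {V : Fin ℓ → Fin n → ℝ} {A : Finset (Fin n)} :
    A ∈ maximalSupports V ↔ Maximal (· ∈ Set.range fun j => suppVec (V j)) A := by
  simp only [maximalSupports, mem_filter, mem_image, mem_univ, true_and, maximal_iff,
    Set.mem_range, forall_exists_index, forall_apply_eq_imp_iff]

theorem maximalSupports_eq_of_lowerClosure_eq {ℓ' : ℕ} {V : Fin ℓ → Fin n → ℝ}
    {V' : Fin ℓ' → Fin n → ℝ}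
    (h : lowerClosure (Set.range fun j => suppVec (V j)) =
      lowerClosure (Set.range fun j => suppVec (V' j))) :
    maximalSupports V = maximalSupports V' := by
  ext A
  simp only [mem_maximalSupports_iff, ← maximal_mem_lowerClosure_iff, h]

theorem interCount_pos_iff (V : Fin ℓ → Fin n → ℝ) (C : Finset (Fin n)) :
    0 < interCount V C ↔ ∃ j, C ⊆ suppVec (V j) := by
  simp [interCount, card_pos, filter_nonempty_iff, suppVec, subset_iff]

theorem mem_lowerClosure_range_suppVec_iff (V : Fin ℓ → Fin n → ℝ) (A : Finset (Fin n)) :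
    A ∈ lowerClosure (Set.range fun j => suppVec (V j)) ↔
      ∀ C ⊆ A, #C ≤ ℓ → 0 < interCount V C := by
  simp only [mem_lowerClosure, Set.exists_range_iff, interCount_pos_iff]
  constructor
  · rintro ⟨j, hA⟩ C hC -
    exact ⟨j, hC.trans hA⟩
  · intro h
    exact exists_subset_of_forall_subset_card_le _ A (by simpa using h)

end Supports

/-- Knowing, for every set `C` of size at most `ℓ`, whether some vector has
non-zero entries on all of `C` uniquely determines the set of maximal supports. -/
theorem maximal_support_recovery (n ℓ : ℕ) (V V' : Fin ℓ → Fin n → ℝ)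
    (h : ∀ C : Finset (Fin n), C.card ≤ ℓ →
      (0 < interCount V C ↔ 0 < interCount V' C)) :
    maximalSupports V = maximalSupports V' := by
  refine maximalSupports_eq_of_lowerClosure_eq (SetLike.ext fun A => ?_)
  simp only [mem_lowerClosure_range_suppVec_iff]
  exact forall₂_congr fun C _ => forall_congr' fun hC => h C hC
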